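/- arXiv:2509.10120 — 4 statements merged into one kernel-verified Lean document; each statement's English description precedes it below -/
import Mathlib

section
/- Let (A, ≤, ∧, ∨) be a finite lattice. For every element a of A, there exists a unique antichain B of the subposet JIrr(A) of join-irreducible elements such that a = ⋁ B and B is maximal among all antichains of join-irreducibles whose join is a, with respect to the order on antichains given by inclusion of the generated order ideals. (This B is called the upper join-decomposition of a.) -/
/-!
The upper join-decomposition of `a` is the set of maximal join-irreducibles below `a`. It is an
antichain, and every join-irreducible below `a` lies under one of its elements; since `a` is the
join of some join-irreducibles, it is therefore the join of this set, and it dominates every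
join-decomposition of `a`. Two antichains dominating each other generate the same order ideal,
whose maximal elements recover each of them, which gives uniqueness.
-/

open Finset

theorem IsAntichain.eq_of_forall_exists_le {α : Type*} [PartialOrder α] {s t : Set α}
    (hs : IsAntichain (· ≤ ·) s) (ht : IsAntichain (· ≤ ·) t)
    (hst : ∀ a ∈ s, ∃ b ∈ t, a ≤ b) (hts : ∀ b ∈ t, ∃ a ∈ s, b ≤ a) : s = t := by
  have hcl : lowerClosure s = lowerClosure t :=
    le_antisymm (lowerClosure_le.2 fun a ha => mem_lowerClosure.2 (hst a ha))
      (lowerClosure_le.2 fun b hb => mem_lowerClosure.2 (hts b hb))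
  ext x
  rw [← hs.maximal_mem_lowerClosure_iff_mem, ← ht.maximal_mem_lowerClosure_iff_mem, hcl]

section UpperJoinDecomposition

variable {A : Type*} [SemilatticeSup A] [Fintype A]

open Classical in
noncomputable def upperJoinDecomposition (a : A) : Finset A :=
  univ.filter (Maximal fun j => SupIrred j ∧ j ≤ a)

theorem mem_upperJoinDecomposition {a b : A} :
    b ∈ upperJoinDecomposition a ↔ Maximal (fun j => SupIrred j ∧ j ≤ a) b := by
  simp [upperJoinDecomposition]

theorem supIrred_of_mem_upperJoinDecomposition {a b : A} (hb : b ∈ upperJoinDecomposition a) :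
    SupIrred b :=
  (mem_upperJoinDecomposition.1 hb).prop.1

theorem le_of_mem_upperJoinDecomposition {a b : A} (hb : b ∈ upperJoinDecomposition a) : b ≤ a :=
  (mem_upperJoinDecomposition.1 hb).prop.2

theorem isAntichain_upperJoinDecomposition (a : A) :
    IsAntichain (· ≤ ·) (upperJoinDecomposition a : Set A) :=
  (setOfPred_maximal_antichain _).subset fun _ => mem_upperJoinDecomposition.1

theorem exists_mem_upperJoinDecomposition_ge {a c : A} (hc : SupIrred c) (hca : c ≤ a) :
    ∃ b ∈ upperJoinDecomposition a, c ≤ b := by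
  obtain ⟨b, hcb, hb⟩ := Finite.exists_le_maximal (p := fun j => SupIrred j ∧ j ≤ a) ⟨hc, hca⟩
  exact ⟨b, mem_upperJoinDecomposition.2 hb, hcb⟩

theorem sup_upperJoinDecomposition [OrderBot A] (a : A) :
    (upperJoinDecomposition a).sup id = a := by
  refine le_antisymm (Finset.sup_le fun b => le_of_mem_upperJoinDecomposition) ?_
  obtain ⟨s, rfl, hs⟩ := exists_supIrred_decomposition a
  refine Finset.sup_le fun c hc => ?_
  obtain ⟨b, hb, hcb⟩ := exists_mem_upperJoinDecomposition_ge (hs hc) (le_sup (f := id) hc)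
  exact hcb.trans (le_sup (f := id) hb)

end UpperJoinDecomposition

/-- In a finite lattice, every element `a` has a unique antichain `B` of
join-irreducible elements with `a = ⋁ B` which is maximal (with respect to the order on
antichains given by inclusion of generated order ideals, i.e. `C ⊑ B` iff every element
of `C` is below some element of `B`) among all antichains of join-irreducibles whose
join is `a`: the upper join-decomposition of `a`. -/
theorem stmt6 {A : Type*} [Lattice A] [OrderBot A] [Fintype A] (a : A) :
    ∃! B : Finset A,
      ((∀ b ∈ B, SupIrred b) ∧ IsAntichain (· ≤ ·) (B : Set A) ∧ a = B.sup id) ∧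
      ∀ C : Finset A, (∀ c ∈ C, SupIrred c) → IsAntichain (· ≤ ·) (C : Set A) →
        a = C.sup id → ∀ c ∈ C, ∃ b ∈ B, c ≤ b := by
  have dominates : ∀ C : Finset A, (∀ c ∈ C, SupIrred c) → a = C.sup id →
      ∀ c ∈ C, ∃ b ∈ upperJoinDecomposition a, c ≤ b := fun C hC hCa c hc =>
    exists_mem_upperJoinDecomposition_ge (hC c hc) (hCa ▸ le_sup (f := id) hc)
  have isDecomp : (∀ b ∈ upperJoinDecomposition a, SupIrred b) ∧
      IsAntichain (· ≤ ·) (upperJoinDecomposition a : Set A) ∧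
      a = (upperJoinDecomposition a).sup id :=
    ⟨fun _ => supIrred_of_mem_upperJoinDecomposition, isAntichain_upperJoinDecomposition a,
      (sup_upperJoinDecomposition a).symm⟩
  refine ⟨upperJoinDecomposition a, ⟨isDecomp, fun C hC _ hCa => dominates C hC hCa⟩, ?_⟩
  rintro B ⟨⟨hBirr, hBanti, hBa⟩, hBmax⟩
  exact Finset.coe_injective <| hBanti.eq_of_forall_exists_le
    (isAntichain_upperJoinDecomposition a) (dominates B hBirr hBa)
    (hBmax _ isDecomp.1 isDecomp.2.1 isDecomp.2.2)
end

section
/- Let (A, ≤, ∧, ∨) be a finite lattice, and suppose B and C are two antichains of join-irreducible elements of A that are both join-decompositions of the same element a (i.e. a = ⋁ B = ⋁ C). Then the antichain D corresponding to the union of the order ideals generated by B and C (within the poset JIrr(A)) is again a join-decomposition of a, and B ⊑ D and C ⊑ D in the antichain order. -/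
variable {A : Type*} [Lattice A] [OrderBot A] [Fintype A]

/-- The order ideal, inside the poset of join-irreducible elements, generated by
`B ∪ C`. -/
def jIdeal (B C : Set A) : Set A :=
  {j | SupIrred j ∧ ((∃ b ∈ B, j ≤ b) ∨ ∃ c ∈ C, j ≤ c)}

/-- The antichain of maximal elements of the ideal generated by `B ∪ C` in the poset of
join-irreducibles: the join `B ⋎ C` in the antichain lattice. -/
def jMax (B C : Set A) : Set A :=
  {j ∈ jIdeal B C | ∀ k ∈ jIdeal B C, j ≤ k → j = k}

/-- If `B` and `C` are antichains of join-irreducible elements of a finite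
lattice that are both join-decompositions of the same element `a`, then the antichain
`D` corresponding to the union of the order ideals generated by `B` and `C` in the
poset of join-irreducibles is again a join-decomposition of `a`, and `B ⊑ D`, `C ⊑ D`
in the antichain order. -/
theorem stmt7 (a : A) (B C : Set A)
    (hBj : B ⊆ {j | SupIrred j}) (hCj : C ⊆ {j | SupIrred j})
    (hBa : IsAntichain (· ≤ ·) B) (hCa : IsAntichain (· ≤ ·) C)
    (hB : IsLUB B a) (hC : IsLUB C a) :
    jMax B C ⊆ {j | SupIrred j} ∧
    IsAntichain (· ≤ ·) (jMax B C) ∧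
    IsLUB (jMax B C) a ∧
    (∀ b ∈ B, ∃ d ∈ jMax B C, b ≤ d) ∧
    (∀ c ∈ C, ∃ d ∈ jMax B C, c ≤ d) := by
  -- every element of the ideal is ≤ a
  have hle : ∀ j ∈ jIdeal B C, j ≤ a := by
    rintro j ⟨-, ⟨b, hb, hjb⟩ | ⟨c, hc, hjc⟩⟩
    · exact hjb.trans (hB.1 hb)
    · exact hjc.trans (hC.1 hc)
  -- every element of the ideal is below some maximal element
  have hmax : ∀ j ∈ jIdeal B C, ∃ d ∈ jMax B C, j ≤ d := by
    intro j hj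
    obtain ⟨m, hm, hmax⟩ := Set.Finite.exists_maximalFor id
      {k ∈ jIdeal B C | j ≤ k} (Set.toFinite _) ⟨j, hj, le_refl j⟩
    refine ⟨m, ⟨hm.1, fun k hk hmk => ?_⟩, hm.2⟩
    exact le_antisymm hmk (hmax ⟨hk, hm.2.trans hmk⟩ hmk)
  have hBd : ∀ b ∈ B, ∃ d ∈ jMax B C, b ≤ d := fun b hb =>
    hmax b ⟨hBj hb, Or.inl ⟨b, hb, le_refl b⟩⟩
  have hCd : ∀ c ∈ C, ∃ d ∈ jMax B C, c ≤ d := fun c hc =>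
    hmax c ⟨hCj hc, Or.inr ⟨c, hc, le_refl c⟩⟩
  refine ⟨fun j hj => hj.1.1, ?_, ⟨fun j hj => hle j hj.1, ?_⟩, hBd, hCd⟩
  · intro x hx y hy hxy h
    exact hxy (hx.2 y hy.1 h)
  · intro x hx
    refine hB.2 fun b hb => ?_
    obtain ⟨d, hd, hbd⟩ := hBd b hb
    exact hbd.trans (hx hd)
end

section
/- Let C be an abelian category with enough projectives and let R be a full additive subcategory of C containing all projective objects and closed under extensions. Then R is closed under kernels of epimorphisms if and only if R is closed under taking syzygies (i.e., for every X in R and every epimorphism P → X with P projective, the kernel lies in R). -/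
open CategoryTheory CategoryTheory.Limits

/-- In an abelian category, the canonical map `kernel f ⟶ pullback f g` is a kernel
of `pullback.snd f g`. -/
noncomputable def kernelFstAux {C : Type*} [Category C] [Abelian C] {X Y Q : C}
    (f : X ⟶ Y) (g : Q ⟶ Y) :
    IsLimit (KernelFork.ofι (pullback.lift (kernel.ι f) 0 (by simp) : kernel f ⟶ pullback f g)
      (pullback.lift_snd _ _ _)) := by
  refine KernelFork.IsLimit.ofι _ _
    (fun {W} a ha => kernel.lift f (a ≫ pullback.fst f g) ?_) (fun {W} a ha => ?_)
    (fun {W} a ha m hm => ?_)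
  · rw [Category.assoc, pullback.condition, ← Category.assoc, ha, zero_comp]
  · apply pullback.hom_ext
    · simp
      rw [pullback.lift_fst, kernel.lift_ι]
    · simp [ha]
      rw [pullback.lift_snd, comp_zero]
  · rw [← cancel_mono (kernel.ι f), kernel.lift_ι, ← hm]
    simp
    rw [pullback.lift_fst]

/-- In an abelian category, the canonical map `kernel g ⟶ pullback f g` is a kernel
of `pullback.fst f g`. -/
noncomputable def kernelSndAux {C : Type*} [Category C] [Abelian C] {X Y Q : C}
    (f : X ⟶ Y) (g : Q ⟶ Y) :
    IsLimit (KernelFork.ofι (pullback.lift 0 (kernel.ι g) (by simp) : kernel g ⟶ pullback f g)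
      (pullback.lift_fst _ _ _)) := by
  refine KernelFork.IsLimit.ofι _ _
    (fun {W} a ha => kernel.lift g (a ≫ pullback.snd f g) ?_) (fun {W} a ha => ?_)
    (fun {W} a ha m hm => ?_)
  · rw [Category.assoc, ← pullback.condition, ← Category.assoc, ha, zero_comp]
  · apply pullback.hom_ext
    · simp [ha]
      rw [pullback.lift_fst, comp_zero]
    · simp
      rw [pullback.lift_snd, kernel.lift_ι]
  · rw [← cancel_mono (kernel.ι g), kernel.lift_ι, ← hm]
    simp
    rw [pullback.lift_snd]

/-- Let `C` be an abelian category with enough projectives and `R` a full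
additive subcategory (class of objects closed under direct sums and summands)
containing all projectives and closed under extensions.  Then `R` is closed under
kernels of epimorphisms if and only if `R` is closed under taking syzygies (kernels of
epimorphisms `P ↠ X` with `P` projective and `X ∈ R`). -/
theorem stmt12 {C : Type*} [Category C] [Abelian C] [EnoughProjectives C]
    (R : C → Prop)
    (hsummand : ∀ X Y Z : C, R Z → (Z ≅ X ⊞ Y) → R X)
    (hsum : ∀ X Y : C, R X → R Y → R (X ⊞ Y))
    (hproj : ∀ P : C, Projective P → R P)
    (hext : ∀ S : ShortComplex C, S.ShortExact → R S.X₁ → R S.X₃ → R S.X₂) :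
    (∀ (X Y : C) (f : X ⟶ Y), Epi f → R X → R Y → R (kernel f)) ↔
      (∀ (P X : C) (f : P ⟶ X), Projective P → Epi f → R X → R (kernel f)) := by
  constructor
  · intro h P X f hP hf hX
    exact h P X f hf (hproj P hP) hX
  · intro hsyz X Y f hf hX hY
    -- take a projective cover g : P ⟶ Y and form the pullback
    set P := Projective.over Y with hP
    set g : P ⟶ Y := Projective.π Y with hg
    have hPproj : Projective P := inferInstance
    have hgepi : Epi g := inferInstance
    -- the syzygy kernel g lies in R
    have hker_g : R (kernel g) := hsyz P Y g hPproj hgepi hY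
    -- Z := pullback f g
    -- first short exact sequence : 0 → kernel g → Z → X → 0
    have hepi_fst : Epi (pullback.fst f g) := by
      exact CategoryTheory.Abelian.epi_pullback_of_epi_g f g
    have hepi_snd : Epi (pullback.snd f g) := by
      exact CategoryTheory.Abelian.epi_pullback_of_epi_f f g
    let S₁ : ShortComplex C := ShortComplex.mk
      (pullback.lift 0 (kernel.ι g) (by simp) : kernel g ⟶ pullback f g)
      (pullback.fst f g) (pullback.lift_fst _ _ _)
    have hS₁ : S₁.ShortExact := by
      refine { exact := ?_, mono_f := ?_, epi_g := hepi_fst }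
      · exact S₁.exact_of_f_is_kernel (kernelSndAux f g)
      · exact mono_of_mono_fac (show S₁.f ≫ pullback.snd f g = kernel.ι g from pullback.lift_snd _ _ _)
    have hZ : R (pullback f g) := hext S₁ hS₁ hker_g hX
    -- second short exact sequence : 0 → kernel f → Z → P → 0, split since P projective
    let S₂ : ShortComplex C := ShortComplex.mk
      (pullback.lift (kernel.ι f) 0 (by simp) : kernel f ⟶ pullback f g)
      (pullback.snd f g) (pullback.lift_snd _ _ _)
    have hS₂ : S₂.ShortExact := by
      refine { exact := ?_, mono_f := ?_, epi_g := hepi_snd }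
      · exact S₂.exact_of_f_is_kernel (kernelFstAux f g)
      · exact mono_of_mono_fac (show S₂.f ≫ pullback.fst f g = kernel.ι f from pullback.lift_fst _ _ _)
    have : Projective S₂.X₃ := hPproj
    let spl : S₂.Splitting := hS₂.splittingOfProjective
    exact hsummand (kernel f) P (pullback f g) hZ spl.isoBinaryBiproduct
end

section
/- Let P be a finite set of arcs forming a dissection of a marked disc without inner cells, and let D₁, D₂ ⊆ P be two P-fan-connected subsets. If D₁ ∩ D₂ ≠ ∅, then D₁ ∪ D₂ is P-fan-connected. -/
/-! We model a marked disc whose marked points all lie on the boundary by labelling the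
boundary marked points `0, 1, …, n-1` counterclockwise, i.e. by `Fin n`.  An arc of the
dissection is a chord, recorded by its pair of endpoints; since all endpoints lie on
the boundary circle, such a dissection never has an inner cell. -/

/-- An arc (chord) joining two marked points of the disc with `n` marked boundary
points, recorded by its endpoints in increasing label order. -/
def DiscArc (n : ℕ) := {p : Fin n × Fin n // p.1 < p.2}

namespace DiscArc

variable {n : ℕ}

/-- `v` is an endpoint of the arc `e`. -/
def IsEndpoint (e : DiscArc n) (v : Fin n) : Prop := e.1.1 = v ∨ e.1.2 = v

/-- The other endpoint of `e` relative to the endpoint `v`. -/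
def other (e : DiscArc n) (v : Fin n) : Fin n := if e.1.1 = v then e.1.2 else e.1.1

/-- Two chords cross in their relative interiors iff their endpoints interleave on the
boundary circle. -/
def Crosses (e f : DiscArc n) : Prop :=
  (e.1.1 < f.1.1 ∧ f.1.1 < e.1.2 ∧ e.1.2 < f.1.2) ∨
  (f.1.1 < e.1.1 ∧ e.1.1 < f.1.2 ∧ f.1.2 < e.1.2)

/-- The position of the arc `e` in the counterclockwise order `≼_v` of arcs around its
endpoint `v`: the counterclockwise distance from `v` to the other endpoint of `e`. -/
def key (e : DiscArc n) (v : Fin n) : Fin n := other e v - v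

/-- `μ` lies weakly between `δ₁` and `δ₂` in the order of arcs around `v`. -/
def Between (v : Fin n) (δ₁ μ δ₂ : DiscArc n) : Prop :=
  (key δ₁ v ≤ key μ v ∧ key μ v ≤ key δ₂ v) ∨
  (key δ₂ v ≤ key μ v ∧ key μ v ≤ key δ₁ v)

/-- Two marked points are joined by an arc of `D`. -/
def Step (D : Set (DiscArc n)) (x y : Fin n) : Prop :=
  ∃ e ∈ D, IsEndpoint e x ∧ IsEndpoint e y

/-- The union of the arcs of `D` is connected: any two marked points lying on arcs of
`D` are joined by a path along arcs of `D`. -/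
def ConnectedArcs (D : Set (DiscArc n)) : Prop :=
  ∀ x y : Fin n, (∃ e ∈ D, IsEndpoint e x) → (∃ e ∈ D, IsEndpoint e y) →
    Relation.ReflTransGen (Step D) x y

/-- `D` is `P`-fan-connected: `D ⊆ P`, the union of the arcs of `D` is connected, and
for any two arcs `δ₁, δ₂ ∈ D` sharing an endpoint `v`, every arc `μ ∈ P` with endpoint
`v` lying between `δ₁` and `δ₂` in the (counterclockwise) order around `v` also belongs
to `D`. -/
def FanConnected (P D : Set (DiscArc n)) : Prop :=
  D ⊆ P ∧ ConnectedArcs D ∧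
    ∀ δ₁ ∈ D, ∀ δ₂ ∈ D, ∀ v : Fin n, IsEndpoint δ₁ v → IsEndpoint δ₂ v →
      ∀ μ ∈ P, IsEndpoint μ v → Between v δ₁ μ δ₂ → μ ∈ D

end DiscArc

namespace DiscArc
variable {n : ℕ}
-- helpers
lemma isEndpoint_other (e : DiscArc n) (v : Fin n) : e.IsEndpoint (e.other v) := by
  unfold IsEndpoint other
  split
  · exact Or.inr rfl
  · exact Or.inl rfl

lemma other_ne (e : DiscArc n) (v : Fin n) : e.other v ≠ v := by
  unfold other
  split
  · rename_i h
    intro hv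
    have h2 := e.2
    rw [h, hv] at h2
    exact lt_irrefl _ h2
  · rename_i h
    exact h

lemma other_eq {e : DiscArc n} {u v : Fin n} (hu : e.IsEndpoint u) (hv : e.IsEndpoint v)
    (huv : u ≠ v) : e.other v = u := by
  have hlt := e.2
  unfold other
  rcases hu with h1 | h1 <;> rcases hv with h2 | h2
  · exact absurd (h1.symm.trans h2) huv
  · have hne : ¬ e.1.1 = v := by
      intro h
      rw [h, h2] at hlt
      exact lt_irrefl _ hlt
    rw [if_neg hne, h1]
  · rw [if_pos h2, h1]
  · exact absurd (h1.symm.trans h2) huv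

lemma key_eq_of {e : DiscArc n} {u v : Fin n} (hu : e.IsEndpoint u) (hv : e.IsEndpoint v)
    (huv : u ≠ v) : e.key v = u - v := by
  unfold key
  rw [other_eq hu hv huv]

lemma endpoints_eq {e : DiscArc n} {u v : Fin n} (hu : e.IsEndpoint u) (hv : e.IsEndpoint v)
    (huv : u ≠ v) : (e.1.1 = u ∧ e.1.2 = v) ∨ (e.1.1 = v ∧ e.1.2 = u) := by
  rcases hu with h1 | h1 <;> rcases hv with h2 | h2
  · exact absurd (h1.symm.trans h2) huv
  · exact Or.inl ⟨h1, h2⟩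
  · exact Or.inr ⟨h2, h1⟩
  · exact absurd (h1.symm.trans h2) huv

lemma arc_ext {e f : DiscArc n} {u v : Fin n} (heu : e.IsEndpoint u) (hev : e.IsEndpoint v)
    (hfu : f.IsEndpoint u) (hfv : f.IsEndpoint v) (huv : u ≠ v) : e = f := by
  rcases endpoints_eq heu hev huv with ⟨h1, h2⟩ | ⟨h1, h2⟩ <;>
    rcases endpoints_eq hfu hfv huv with ⟨h3, h4⟩ | ⟨h3, h4⟩
  · exact Subtype.ext (Prod.ext (h1.trans h3.symm) (h2.trans h4.symm))
  · have he2 := e.2; have hf2 := f.2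
    rw [h1, h2] at he2; rw [h3, h4] at hf2
    exact absurd he2 (asymm hf2)
  · have he2 := e.2; have hf2 := f.2
    rw [h1, h2] at he2; rw [h3, h4] at hf2
    exact absurd he2 (asymm hf2)
  · exact Subtype.ext (Prod.ext (h1.trans h3.symm) (h2.trans h4.symm))

lemma sub_val_cases (a b : Fin n) :
    (a - b).val + b.val = a.val ∨ (a - b).val + b.val = a.val + n := by
  have hn : 0 < n := a.pos
  haveI : NeZero n := ⟨hn.ne'⟩
  have hadd : (a - b) + b = a := sub_add_cancel a b
  have h : ((a - b).val + b.val) % n = a.val := by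
    rw [← Fin.val_add, hadd]
  rcases lt_or_ge ((a - b).val + b.val) n with h' | h'
  · left; rwa [Nat.mod_eq_of_lt h'] at h
  · right
    have hb := b.isLt; have hs := (a - b).isLt
    have h2 : (a - b).val + b.val - n < n := by omega
    rw [Nat.mod_eq_sub_mod h', Nat.mod_eq_of_lt h2] at h
    omega

lemma sub_self_val (v : Fin n) : (v - v).val = 0 := by
  have h := sub_val_cases v v
  have := (v - v).isLt
  omega

lemma eq_of_sub_val_eq {a b v : Fin n} (h : (a - v).val = (b - v).val) : a = b := by
  have h1 := sub_val_cases a v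
  have h2 := sub_val_cases b v
  have := a.isLt; have := b.isLt; have := v.isLt
  apply Fin.ext
  rcases h1 with h1 | h1 <;> rcases h2 with h2 | h2 <;> omega

lemma sub_val_pos {a v : Fin n} (h : a ≠ v) : 0 < (a - v).val :=
  Nat.pos_of_ne_zero fun h0 => h (eq_of_sub_val_eq (by rw [h0, sub_self_val]))

lemma key_val_pos (e : DiscArc n) (v : Fin n) : 0 < (e.key v).val :=
  sub_val_pos (other_ne e v)


lemma cross_of_sides {μ e : DiscArc n} {v x y : Fin n}
    (hμv : μ.IsEndpoint v) (hex : e.IsEndpoint x) (hey : e.IsEndpoint y)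
    (h0 : 0 < (x - v).val) (h1 : (x - v).val < (μ.key v).val)
    (h2 : (μ.key v).val < (y - v).val) :
    Crosses μ e ∨ Crosses e μ := by
  have hμw : μ.IsEndpoint (μ.other v) := isEndpoint_other μ v
  have hk : (μ.key v).val = (μ.other v - v).val := rfl
  have hxv : x ≠ v := fun h => by rw [h, sub_self_val] at h0; omega
  have hyv : y ≠ v := fun h => by rw [h, sub_self_val] at h2; omega
  have hxw : x ≠ μ.other v := fun h => by rw [h] at h1; omega
  have hyw : y ≠ μ.other v := fun h => by rw [h] at h2; omega
  have hxy : x ≠ y := fun h => by rw [h] at h1; omega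
  have hvw : v ≠ μ.other v := (other_ne μ v).symm
  have hce := endpoints_eq hex hey hxy
  have hcμ := endpoints_eq hμv hμw hvw
  have he2 := e.2
  have hμ2 := μ.2
  have sx := sub_val_cases x v
  have sy := sub_val_cases y v
  have sw := sub_val_cases (μ.other v) v
  have := x.isLt; have := y.isLt; have := v.isLt; have := (μ.other v).isLt
  rw [Fin.lt_def] at he2 hμ2
  rcases hce with ⟨hA, hB⟩ | ⟨hA, hB⟩ <;> rcases hcμ with ⟨hC, hD⟩ | ⟨hC, hD⟩ <;>
    have hA' := congrArg Fin.val hA <;> have hB' := congrArg Fin.val hB <;>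
    have hC' := congrArg Fin.val hC <;> have hD' := congrArg Fin.val hD <;>
    simp only [Crosses, Fin.lt_def] <;>
    rcases sx with sx | sx <;> rcases sy with sy | sy <;> rcases sw with sw | sw <;>
    omega



lemma fan_cross {P D : Set (DiscArc n)}
    (hnc : ∀ e ∈ P, ∀ f ∈ P, ¬ Crosses e f)
    (hD : FanConnected P D) {μ : DiscArc n} (hμ : μ ∈ P) {v : Fin n}
    (hμv : μ.IsEndpoint v) {x₁ x₂ : Fin n}
    (hx₁ : ∃ e ∈ D, e.IsEndpoint x₁) (hx₂ : ∃ e ∈ D, e.IsEndpoint x₂)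
    (h₁0 : 0 < (x₁ - v).val) (h₁m : (x₁ - v).val < (μ.key v).val)
    (h₂ : (μ.key v).val < (x₂ - v).val) : μ ∈ D := by
  obtain ⟨hDP, hConn, hFan⟩ := hD
  set w := μ.other v with hw
  have hμw : μ.IsEndpoint w := isEndpoint_other μ v
  have hwv : w ≠ v := other_ne μ v
  have hvw : v ≠ w := hwv.symm
  have hmw : (μ.key v).val = (w - v).val := rfl
  have hkμw : μ.key w = v - w := key_eq_of hμv hμw hvw
  have hR := hConn x₁ x₂ hx₁ hx₂
  have key_inv : ∀ y, Relation.ReflTransGen (Step D) x₁ y →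
      (μ ∈ D ∨ (0 < (y - v).val ∧ (y - v).val < (μ.key v).val) ∨
       (y = v ∧ ∃ δ ∈ D, δ.IsEndpoint v ∧ (δ.key v).val < (μ.key v).val) ∨
       (y = w ∧ ∃ δ ∈ D, δ.IsEndpoint w ∧
          (μ.key w).val < (δ.key w).val)) := by
    intro y hy
    induction hy with
    | refl => exact Or.inr (Or.inl ⟨h₁0, h₁m⟩)
    | @tail b c hab hstep ih =>
      obtain ⟨e, heD, heb, hec⟩ := hstep
      rcases ih with hmem | ⟨hb0, hbm⟩ | ⟨hbv, δ, hδD, hδv, hδk⟩ | ⟨hbw, δ, hδD, hδw, hδk⟩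
      · exact Or.inl hmem
      · -- b strictly on side A
        have hbv : b ≠ v := fun h => by rw [h, sub_self_val] at hb0; omega
        rcases Nat.lt_trichotomy (c - v).val (μ.key v).val with hlt | heq | hgt
        · rcases Nat.eq_zero_or_pos (c - v).val with hc0 | hc0
          · -- c = v : store arc at v
            have hcv : c = v := eq_of_sub_val_eq (v := v) (by rw [sub_self_val]; exact hc0)
            refine Or.inr (Or.inr (Or.inl ⟨hcv, e, heD, hcv ▸ hec, ?_⟩))
            have hke : e.key v = b - v := key_eq_of heb (hcv ▸ hec) hbv
            rw [hke]; exact hbm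
          · exact Or.inr (Or.inl ⟨hc0, hlt⟩)
        · -- c = w : store arc at w
          have hcw : c = w := eq_of_sub_val_eq (v := v) (by rw [← hmw]; exact heq)
          have hecw : e.IsEndpoint w := hcw ▸ hec
          have hbw : b ≠ w := fun h => by rw [h] at hbm; omega
          refine Or.inr (Or.inr (Or.inr ⟨hcw, e, heD, hecw, ?_⟩))
          have hke : e.key w = b - w := key_eq_of heb hecw hbw
          rw [hke, hkμw]
          have s1 := sub_val_cases b w
          have s2 := sub_val_cases v w
          have s3 := sub_val_cases b v
          have s4 := sub_val_cases w v
          have := b.isLt; have := w.isLt; have := v.isLt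
          have := (b - w).isLt; have := (v - w).isLt
          rw [hmw] at hbm
          rcases s1 with s1 | s1 <;> rcases s2 with s2 | s2 <;>
            rcases s3 with s3 | s3 <;> rcases s4 with s4 | s4 <;> omega
        · -- crossing: contradiction
          rcases cross_of_sides hμv heb hec hb0 hbm hgt with hc | hc
          · exact absurd hc (hnc μ hμ e (hDP heD))
          · exact absurd hc (hnc e (hDP heD) μ hμ)
      · -- b = v with stored δ
        have hebv : e.IsEndpoint v := hbv ▸ heb
        rcases Nat.lt_trichotomy (c - v).val (μ.key v).val with hlt | heq | hgt
        · rcases Nat.eq_zero_or_pos (c - v).val with hc0 | hc0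
          · have hcv : c = v := eq_of_sub_val_eq (v := v) (by rw [sub_self_val]; exact hc0)
            exact Or.inr (Or.inr (Or.inl ⟨hcv, δ, hδD, hδv, hδk⟩))
          · exact Or.inr (Or.inl ⟨hc0, hlt⟩)
        · -- c = w : e = μ
          have hcw : c = w := eq_of_sub_val_eq (v := v) (by rw [← hmw]; exact heq)
          have : e = μ := arc_ext hebv (hcw ▸ hec) hμv hμw hvw
          exact Or.inl (this ▸ heD)
        · -- fan condition at v
          have hcv : c ≠ v := fun h => by rw [h, sub_self_val] at hgt; omega
          have hke : e.key v = c - v := key_eq_of hec hebv hcv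
          refine Or.inl (hFan δ hδD e heD v hδv hebv μ hμ hμv (Or.inl ⟨?_, ?_⟩))
          · exact Fin.le_def.mpr hδk.le
          · rw [Fin.le_def, hke]; exact hgt.le
      · -- b = w with stored δ
        have hebw : e.IsEndpoint w := hbw ▸ heb
        rcases Nat.lt_trichotomy (c - v).val (μ.key v).val with hlt | heq | hgt
        · rcases Nat.eq_zero_or_pos (c - v).val with hc0 | hc0
          · -- c = v : e = μ
            have hcv : c = v := eq_of_sub_val_eq (v := v) (by rw [sub_self_val]; exact hc0)
            have : e = μ := arc_ext (hcv ▸ hec) hebw hμv hμw hvw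
            exact Or.inl (this ▸ heD)
          · exact Or.inr (Or.inl ⟨hc0, hlt⟩)
        · have hcw : c = w := eq_of_sub_val_eq (v := v) (by rw [← hmw]; exact heq)
          exact Or.inr (Or.inr (Or.inr ⟨hcw, δ, hδD, hδw, hδk⟩))
        · -- fan condition at w
          have hcw : c ≠ w := fun h => by rw [h] at hgt; omega
          have hke : e.key w = c - w := key_eq_of hec hebw hcw
          refine Or.inl (hFan e heD δ hδD w hebw hδw μ hμ hμw (Or.inl ⟨?_, ?_⟩))
          · rw [Fin.le_def, hke, hkμw]
            have s1 := sub_val_cases c w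
            have s2 := sub_val_cases v w
            have s3 := sub_val_cases c v
            have s4 := sub_val_cases w v
            have := c.isLt; have := w.isLt; have := v.isLt
            have := (c - w).isLt; have := (v - w).isLt
            rw [hmw] at hgt
            have hm0 : 0 < (w - v).val := sub_val_pos hwv
            rcases s1 with s1 | s1 <;> rcases s2 with s2 | s2 <;>
              rcases s3 with s3 | s3 <;> rcases s4 with s4 | s4 <;> omega
          · exact Fin.le_def.mpr hδk.le
  rcases key_inv x₂ hR with h | ⟨_, h⟩ | ⟨hyv, _⟩ | ⟨hyw, _⟩
  · exact h
  · omega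
  · rw [hyv, sub_self_val] at h₂; omega
  · rw [hyw, ← hmw] at h₂; omega

lemma glue {P D₁ D₂ : Set (DiscArc n)}
    (hnc : ∀ e ∈ P, ∀ f ∈ P, ¬ Crosses e f)
    (hf1 : FanConnected P D₁) (hf2 : FanConnected P D₂)
    {ε : DiscArc n} (hε1 : ε ∈ D₁) (hε2 : ε ∈ D₂)
    {δa δb μ : DiscArc n} {v : Fin n}
    (ha : δa ∈ D₁) (hb : δb ∈ D₂) (hav : δa.IsEndpoint v) (hbv : δb.IsEndpoint v)
    (hμ : μ ∈ P) (hμv : μ.IsEndpoint v)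
    (hka : (δa.key v).val ≤ (μ.key v).val) (hkb : (μ.key v).val ≤ (δb.key v).val) :
    μ ∈ D₁ ∪ D₂ := by
  set w := μ.other v with hw
  have hμw : μ.IsEndpoint w := isEndpoint_other μ v
  have hwv : w ≠ v := other_ne μ v
  have hvw : v ≠ w := hwv.symm
  have hmw : (μ.key v).val = (w - v).val := rfl
  -- degenerate cases : key equal gives equal arcs
  by_cases hea : (δa.key v).val = (μ.key v).val
  · left
    have h1 : (δa.other v - v).val = (w - v).val := hea
    have h2 : δa.other v = w := eq_of_sub_val_eq h1
    have : δa = μ := arc_ext (isEndpoint_other δa v) hav (h2 ▸ hμw) hμv (other_ne δa v)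
    exact this ▸ ha
  by_cases heb : (δb.key v).val = (μ.key v).val
  · right
    have h1 : (δb.other v - v).val = (w - v).val := heb
    have h2 : δb.other v = w := eq_of_sub_val_eq h1
    have : δb = μ := arc_ext (isEndpoint_other δb v) hbv (h2 ▸ hμw) hμv (other_ne δb v)
    exact this ▸ hb
  have hka' : (δa.key v).val < (μ.key v).val := lt_of_le_of_ne hka hea
  have hkb' : (μ.key v).val < (δb.key v).val := lt_of_le_of_ne hkb (fun h => heb h.symm)
  by_cases hεv : ε.IsEndpoint v
  · -- ε has endpoint v : direct fan argument
    rcases le_or_gt (ε.key v).val (μ.key v).val with hle | hlt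
    · right
      exact hf2.2.2 ε hε2 δb hb v hεv hbv μ hμ hμv
        (Or.inl ⟨Fin.le_def.mpr hle, Fin.le_def.mpr hkb⟩)
    · left
      exact hf1.2.2 δa ha ε hε1 v hav hεv μ hμ hμv
        (Or.inl ⟨Fin.le_def.mpr hka, Fin.le_def.mpr hlt.le⟩)
  · -- both endpoints of ε differ from v
    have cross1 : ∀ x : Fin n, ε.IsEndpoint x → (μ.key v).val < (x - v).val → μ ∈ D₁ := by
      intro x hx hgt
      exact fan_cross hnc hf1 hμ hμv ⟨δa, ha, isEndpoint_other δa v⟩ ⟨ε, hε1, hx⟩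
        (key_val_pos δa v) hka' hgt
    have cross2 : ∀ x : Fin n, ε.IsEndpoint x → 0 < (x - v).val →
        (x - v).val < (μ.key v).val → μ ∈ D₂ := by
      intro x hx h0 hlt
      exact fan_cross hnc hf2 hμ hμv ⟨ε, hε2, hx⟩ ⟨δb, hb, isEndpoint_other δb v⟩
        h0 hlt hkb'
    have hεa : ε.IsEndpoint ε.1.1 := Or.inl rfl
    have hεb : ε.IsEndpoint ε.1.2 := Or.inr rfl
    have hav' : ε.1.1 ≠ v := fun h => hεv (Or.inl h)
    have hbv' : ε.1.2 ≠ v := fun h => hεv (Or.inr h)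
    rcases Nat.lt_trichotomy (ε.1.1 - v).val (μ.key v).val with h1 | h1 | h1
    · exact Or.inr (cross2 _ hεa (sub_val_pos hav') h1)
    · -- ε.1.1 = w ; look at the second endpoint
      rcases Nat.lt_trichotomy (ε.1.2 - v).val (μ.key v).val with h2 | h2 | h2
      · exact Or.inr (cross2 _ hεb (sub_val_pos hbv') h2)
      · -- both endpoints equal w : contradiction
        have e1 : ε.1.1 = w := eq_of_sub_val_eq (v := v) (by rw [← hmw]; exact h1)
        have e2 : ε.1.2 = w := eq_of_sub_val_eq (v := v) (by rw [← hmw]; exact h2)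
        have := ε.2
        rw [e1, e2] at this
        exact absurd this (lt_irrefl _)
      · exact Or.inl (cross1 _ hεb h2)
    · exact Or.inl (cross1 _ hεa h1)

end DiscArc

/-- Let `P` be a finite set of pairwise noncrossing arcs forming a
dissection of a marked disc (without inner cells, as all endpoints are on the
boundary), and let `D₁, D₂ ⊆ P` be `P`-fan-connected.  If `D₁ ∩ D₂ ≠ ∅`, then
`D₁ ∪ D₂` is `P`-fan-connected. -/
theorem stmt15 {n : ℕ} (P D₁ D₂ : Set (DiscArc n))
    (hPfin : P.Finite)
    (hnc : ∀ e ∈ P, ∀ f ∈ P, ¬ DiscArc.Crosses e f)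
    (h1 : D₁ ⊆ P) (h2 : D₂ ⊆ P)
    (hf1 : DiscArc.FanConnected P D₁) (hf2 : DiscArc.FanConnected P D₂)
    (hne : (D₁ ∩ D₂).Nonempty) :
    DiscArc.FanConnected P (D₁ ∪ D₂) := by
  obtain ⟨ε, hε1, hε2⟩ := hne
  refine ⟨Set.union_subset h1 h2, ?_, ?_⟩
  · -- connectivity
    intro x y hx hy
    have hεz : ε.IsEndpoint ε.1.1 := Or.inl rfl
    have mono1 : ∀ a b, DiscArc.Step D₁ a b → DiscArc.Step (D₁ ∪ D₂) a b :=
      fun a b ⟨e, he, h⟩ => ⟨e, Or.inl he, h⟩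
    have mono2 : ∀ a b, DiscArc.Step D₂ a b → DiscArc.Step (D₁ ∪ D₂) a b :=
      fun a b ⟨e, he, h⟩ => ⟨e, Or.inr he, h⟩
    have hxz : Relation.ReflTransGen (DiscArc.Step (D₁ ∪ D₂)) x ε.1.1 := by
      rcases hx with ⟨e, he | he, heu⟩
      · exact Relation.ReflTransGen.mono mono1 _ _ (hf1.2.1 x ε.1.1 ⟨e, he, heu⟩ ⟨ε, hε1, hεz⟩)
      · exact Relation.ReflTransGen.mono mono2 _ _ (hf2.2.1 x ε.1.1 ⟨e, he, heu⟩ ⟨ε, hε2, hεz⟩)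
    have hzy : Relation.ReflTransGen (DiscArc.Step (D₁ ∪ D₂)) ε.1.1 y := by
      rcases hy with ⟨e, he | he, heu⟩
      · exact Relation.ReflTransGen.mono mono1 _ _ (hf1.2.1 ε.1.1 y ⟨ε, hε1, hεz⟩ ⟨e, he, heu⟩)
      · exact Relation.ReflTransGen.mono mono2 _ _ (hf2.2.1 ε.1.1 y ⟨ε, hε2, hεz⟩ ⟨e, he, heu⟩)
    exact hxz.trans hzy
  · -- fan condition
    intro δ₁ hδ₁ δ₂ hδ₂ v h1v h2v μ hμP hμv hbet
    rcases hδ₁ with hA | hA <;> rcases hδ₂ with hB | hB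
    · exact Or.inl (hf1.2.2 δ₁ hA δ₂ hB v h1v h2v μ hμP hμv hbet)
    · rcases hbet with ⟨l, r⟩ | ⟨l, r⟩
      · exact DiscArc.glue hnc hf1 hf2 hε1 hε2 hA hB h1v h2v hμP hμv
          (Fin.le_def.mp l) (Fin.le_def.mp r)
      · rcases DiscArc.glue hnc hf2 hf1 hε2 hε1 hB hA h2v h1v hμP hμv
          (Fin.le_def.mp l) (Fin.le_def.mp r) with h | h
        · exact Or.inr h
        · exact Or.inl h
    · rcases hbet with ⟨l, r⟩ | ⟨l, r⟩
      · rcases DiscArc.glue hnc hf2 hf1 hε2 hε1 hA hB h1v h2v hμP hμv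
          (Fin.le_def.mp l) (Fin.le_def.mp r) with h | h
        · exact Or.inr h
        · exact Or.inl h
      · exact DiscArc.glue hnc hf1 hf2 hε1 hε2 hB hA h2v h1v hμP hμv
          (Fin.le_def.mp l) (Fin.le_def.mp r)
    · exact Or.inr (hf2.2.2 δ₁ hA δ₂ hB v h1v h2v μ hμP hμv hbet)
end
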